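/- The quadratic function F(θ₁,…,θₙ) = (1/2)·Σ_{1≤i<j≤n} [θᵢ² + (θⱼ - θᵢ)² + (1 - θⱼ)²] on ℝⁿ has gradient zero exactly at the point θᵢ = (n + 2(i-1))/(4n-2) for i = 1,…,n, and this point is its unique global minimizer. -/

import Mathlib

/-!
Expanding each summand at `θ + v` gives the exact second-order expansion
`F(θ + v) = F(θ) + ⟨∇F(θ), v⟩ + Q(v)` with `Q(v) = (1/2) Σ_{i<j} [vᵢ² + (vⱼ - vᵢ)² + vⱼ²]`.
At `θ*` the gradient vanishes, so `F(θ) = F(θ*) + Q(θ - θ*)`, and `Q` is positive definite once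
there is a pair `i < j`. Restricted to the line through `θ*` and a critical point `θ`, `F` is
`t ↦ F(θ*) + t² Q(θ - θ*)`, whose derivative at `t = 1` is `2 Q(θ - θ*)`; hence `θ = θ*`.
-/

open MeasureTheory Set

/-- `F(θ) = (1/2)·Σ_{i<j} [θᵢ² + (θⱼ - θᵢ)² + (1 - θⱼ)²]`. -/
noncomputable def invSum (n : ℕ) (θ : Fin n → ℝ) : ℝ :=
  (1/2) * ∑ i : Fin n, ∑ j : Fin n,
    (if i < j then (θ i)^2 + (θ j - θ i)^2 + (1 - θ j)^2 else 0)

/-- `θᵢ = (n + 2(i-1))/(4n-2)` (0-indexed). -/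
noncomputable def θstar (n : ℕ) (i : Fin n) : ℝ := ((n : ℝ) + 2 * (i : ℕ)) / (4 * n - 2)

theorem fderiv_eq_zero_iff_of_eq_add_homogeneous {E : Type*} [NormedAddCommGroup E]
    [NormedSpace ℝ E] {f Q : E → ℝ} {x₀ x : E} (hf : DifferentiableAt ℝ f x)
    (hfQ : ∀ y, f y = f x₀ + Q (y - x₀)) (hQ_smul : ∀ (t : ℝ) v, Q (t • v) = t ^ 2 * Q v)
    (hQ_pos : ∀ v ≠ 0, 0 < Q v) :
    fderiv ℝ f x = 0 ↔ x = x₀ := by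
  constructor
  · intro hx
    set v := x - x₀
    have hline : HasDerivAt (fun t : ℝ => x₀ + t • v) v 1 := by
      simpa using ((hasDerivAt_id (1 : ℝ)).smul_const v).const_add x₀
    have hx_line : x₀ + (1 : ℝ) • v = x := by simp [v]
    have h₁ : HasDerivAt (f ∘ fun t : ℝ => x₀ + t • v) 0 1 := by
      have hf' : HasFDerivAt f (0 : E →L[ℝ] ℝ) (x₀ + (1 : ℝ) • v) := by
        rw [hx_line, ← hx]; exact hf.hasFDerivAt
      simpa using hf'.comp_hasDerivAt 1 hline
    have h₂ : HasDerivAt (f ∘ fun t : ℝ => x₀ + t • v) (2 * Q v) 1 := by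
      have hf_line : (f ∘ fun t : ℝ => x₀ + t • v) = fun t => f x₀ + t ^ 2 * Q v := by
        ext t; rw [Function.comp_apply, hfQ, add_sub_cancel_left, hQ_smul]
      rw [hf_line]
      simpa using ((hasDerivAt_pow 2 (1 : ℝ)).mul_const (Q v)).const_add (f x₀)
    have hQv : Q v = 0 := by linarith [h₁.unique h₂]
    by_contra hne
    exact (hQ_pos v (sub_ne_zero.2 hne)).ne' hQv
  · rintro rfl
    refine IsLocalMin.fderiv_eq_zero (Filter.Eventually.of_forall fun y => ?_)
    rw [hfQ y, le_add_iff_nonneg_right]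
    rcases eq_or_ne (y - x) 0 with h | h
    · simpa [h] using (hQ_smul 0 0).ge
    · exact (hQ_pos _ h).le

noncomputable def invSumQuad (n : ℕ) (v : Fin n → ℝ) : ℝ :=
  (1/2) * ∑ i : Fin n, ∑ j : Fin n, if i < j then v i ^ 2 + (v j - v i) ^ 2 + v j ^ 2 else 0

theorem invSumQuad_smul (n : ℕ) (t : ℝ) (v : Fin n → ℝ) :
    invSumQuad n (t • v) = t ^ 2 * invSumQuad n v := by
  simp only [invSumQuad, Pi.smul_apply, smul_eq_mul, Finset.mul_sum, mul_ite, mul_zero]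
  congr! 3
  ring

theorem invSumQuad_pos {n : ℕ} (hn : 2 ≤ n) {v : Fin n → ℝ} (hv : v ≠ 0) :
    0 < invSumQuad n v := by
  have hterm : ∀ i j : Fin n, 0 ≤ if i < j then v i ^ 2 + (v j - v i) ^ 2 + v j ^ 2 else 0 := by
    intro i j; split_ifs <;> positivity
  obtain ⟨i, hi⟩ : ∃ i, v i ≠ 0 := Function.ne_iff.1 hv
  have : Nontrivial (Fin n) := Fin.nontrivial_iff_two_le.2 hn
  obtain ⟨j, hj⟩ := exists_ne i
  obtain ⟨a, b, hab, hpos⟩ : ∃ a b : Fin n, a < b ∧ 0 < v a ^ 2 + (v b - v a) ^ 2 + v b ^ 2 := by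
    rcases hj.lt_or_gt with h | h
    · exact ⟨j, i, h, by positivity⟩
    · exact ⟨i, j, h, by positivity⟩
  refine mul_pos one_half_pos (Finset.sum_pos' (fun k _ => Finset.sum_nonneg fun l _ => hterm k l)
    ⟨a, Finset.mem_univ _, Finset.sum_pos' (fun l _ => hterm a l) ⟨b, Finset.mem_univ _, ?_⟩⟩)
  rwa [if_pos hab]

-- The partial derivative `∂F/∂θₖ`; with 0-based indices the paper's `i - 1` becomes `k`.
noncomputable def invSumGrad (n : ℕ) (θ : Fin n → ℝ) (k : Fin n) : ℝ :=
  (2 * n - 1) * θ k - k - ∑ j, θ j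

theorem sum_ite_lt_eq_invSumGrad (n : ℕ) (θ : Fin n → ℝ) (k : Fin n) :
    ∑ l, ((if k < l then 2 * θ k - θ l else 0) + (if l < k then 2 * θ k - θ l - 1 else 0)) =
      invSumGrad n θ k := by
  have hpt : ∀ l, (if k < l then 2 * θ k - θ l else 0) + (if l < k then 2 * θ k - θ l - 1 else 0)
      = (2 * θ k - θ l) - (if k = l then θ k else 0) - (if l < k then 1 else 0) := by
    intro l
    rcases lt_trichotomy k l with h | rfl | h
    · simp [h, h.ne, h.not_gt]
    · simp; ring
    · simp [h, h.ne', h.not_gt]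
  simp only [hpt, Finset.sum_sub_distrib, Finset.sum_const, Finset.sum_ite_eq, Finset.mem_univ,
    if_true, Finset.sum_boole, Finset.card_univ, Fintype.card_fin, nsmul_eq_mul]
  rw [invSumGrad, Finset.filter_gt_eq_Iio, Fin.card_Iio]
  ring

theorem sum_sum_ite_lt_eq_sum_invSumGrad_mul (n : ℕ) (θ v : Fin n → ℝ) :
    ∑ i, ∑ j, (if i < j then (2 * θ i - θ j) * v i + (2 * θ j - θ i - 1) * v j else 0) =
      ∑ k, invSumGrad n θ k * v k := by
  simp only [ite_add_zero, Finset.sum_add_distrib]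
  rw [Finset.sum_comm (f := fun i j => if i < j then (2 * θ j - θ i - 1) * v j else 0),
    ← Finset.sum_add_distrib]
  refine Finset.sum_congr rfl fun k _ => ?_
  rw [← sum_ite_lt_eq_invSumGrad, Finset.sum_mul, ← Finset.sum_add_distrib]
  refine Finset.sum_congr rfl fun l _ => ?_
  split_ifs <;> ring

theorem invSum_add (n : ℕ) (θ v : Fin n → ℝ) :
    invSum n (θ + v) = invSum n θ + ∑ k, invSumGrad n θ k * v k + invSumQuad n v := by
  have hpair : ∀ i j : Fin n,
      (if i < j then (θ + v) i ^ 2 + ((θ + v) j - (θ + v) i) ^ 2 + (1 - (θ + v) j) ^ 2 else 0) =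
        (if i < j then θ i ^ 2 + (θ j - θ i) ^ 2 + (1 - θ j) ^ 2 else 0) +
        2 * (if i < j then (2 * θ i - θ j) * v i + (2 * θ j - θ i - 1) * v j else 0) +
        (if i < j then v i ^ 2 + (v j - v i) ^ 2 + v j ^ 2 else 0) := by
    intro i j
    split_ifs
    · simp only [Pi.add_apply]; ring
    · ring
  simp only [invSum, invSumQuad, hpair, Finset.sum_add_distrib, ← Finset.mul_sum,
    sum_sum_ite_lt_eq_sum_invSumGrad_mul]
  ring

theorem sum_fin_natCast_val (n : ℕ) : ∑ j : Fin n, ((j : ℕ) : ℝ) = n * (n - 1) / 2 := by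
  rw [Fin.sum_univ_eq_sum_range (fun j => (j : ℝ))]
  induction n with
  | zero => simp
  | succ n ih => rw [Finset.sum_range_succ, ih]; push_cast; ring

theorem invSumGrad_θstar {n : ℕ} (hn : 1 ≤ n) : invSumGrad n (θstar n) = 0 := by
  have hd : (2 * n - 1 : ℝ) ≠ 0 := by
    have : (1 : ℝ) ≤ n := by exact_mod_cast hn
    linarith
  ext k
  simp only [invSumGrad, θstar, ← Finset.sum_div, Finset.sum_add_distrib, ← Finset.mul_sum,
    sum_fin_natCast_val, Finset.sum_const, Finset.card_univ, Fintype.card_fin, nsmul_eq_mul,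
    Pi.zero_apply]
  rw [show (4 * n - 2 : ℝ) = 2 * (2 * n - 1) by ring]
  field_simp
  ring

theorem invSum_eq_invSum_θstar_add {n : ℕ} (hn : 1 ≤ n) (θ : Fin n → ℝ) :
    invSum n θ = invSum n (θstar n) + invSumQuad n (θ - θstar n) := by
  simpa [invSumGrad_θstar hn] using invSum_add n (θstar n) (θ - θstar n)

theorem differentiable_invSum (n : ℕ) : Differentiable ℝ (invSum n) := by
  unfold invSum
  refine .const_mul (.fun_sum fun i _ => .fun_sum fun j _ => ?_) _
  split_ifs <;> fun_prop

/-- The quadratic function `F(θ₁,…,θₙ) = (1/2) Σ_{i<j}[θᵢ² + (θⱼ-θᵢ)² + (1-θⱼ)²]`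
on `ℝⁿ` has vanishing gradient exactly at `θᵢ = (n+2(i-1))/(4n-2)`, and this point is
its unique global minimizer. -/
theorem stmt_10 (n : ℕ) (hn : 2 ≤ n) :
    (∀ θ : Fin n → ℝ, fderiv ℝ (invSum n) θ = 0 ↔ θ = θstar n) ∧
    (∀ θ : Fin n → ℝ, θ ≠ θstar n → invSum n (θstar n) < invSum n θ) := by
  have hexp := invSum_eq_invSum_θstar_add (by omega : 1 ≤ n)
  refine ⟨fun θ => fderiv_eq_zero_iff_of_eq_add_homogeneous (differentiable_invSum n θ) hexp
    (invSumQuad_smul n) fun v => invSumQuad_pos hn, fun θ hθ => ?_⟩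
  rw [hexp θ, lt_add_iff_pos_right]
  exact invSumQuad_pos hn (sub_ne_zero.2 hθ)
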